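/- Let p = q = 1/2 (symmetric simple random walk). For every n ≥ 0, the exact identity E((M_n^+)^2) + E(M_n^+) = n holds. -/

import Mathlib

/-!
Write `g m = m² + m`. Splitting off the first step, `M_{n+1}^+ = max 0 (X_1 + M')` where `M'` is
the maximum of the walk driven by the remaining `n` steps. Averaging over `X_1` then raises the mean
of `g` by exactly `1`: `g (m + 1) + g (m - 1) = 2 g m + 2`, and the truncation at `0` is harmless
because `g (-1) = g 0`. Hence `∑ g (M_n^+) = n 2ⁿ` over all `2ⁿ` paths, by induction on `n`.
-/

open Finset Filter

/-- The value `±1` of a single step of the walk, driven by a Boolean. -/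
def step (b : Bool) : ℤ := if b then 1 else -1

/-- The partial sum `S_j = X_1 + ⋯ + X_j` of the simple random walk driven by `ω`. -/
def walk {n : ℕ} (ω : Fin n → Bool) (j : ℕ) : ℤ :=
  ∑ i ∈ Finset.univ.filter fun i : Fin n => (i : ℕ) < j, step (ω i)

/-- `M_n^+ = max_{0 ≤ j ≤ n} S_j`. -/
def mplus {n : ℕ} (ω : Fin n → Bool) : ℤ :=
  (Finset.range (n + 1)).sup' (by simp) (walk ω)

/-- `M_n^- = -min_{0 ≤ j ≤ n} S_j`. -/
def mminus {n : ℕ} (ω : Fin n → Bool) : ℤ :=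
  -((Finset.range (n + 1)).inf' (by simp) (walk ω))

/-- The probability weight of the path `ω` when `P{Xᵢ = 1} = p`, `P{Xᵢ = -1} = 1 - p`,
independently over `i`. -/
def wt (p : ℝ) {n : ℕ} (ω : Fin n → Bool) : ℝ :=
  ∏ i, if ω i then p else 1 - p

/-- The probability of an event `A` for a walk of length `n`. -/
noncomputable def prob (p : ℝ) {n : ℕ} (A : Set (Fin n → Bool)) : ℝ :=
  ∑ ω : Fin n → Bool, A.indicator (wt p) ω

/-- The expectation of a functional `f` of a walk of length `n`. -/
noncomputable def expectation (p : ℝ) {n : ℕ} (f : (Fin n → Bool) → ℝ) : ℝ :=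
  ∑ ω : Fin n → Bool, wt p ω * f ω

theorem Fintype.sum_fin_succ_fun {α M : Type*} [Fintype α] [AddCommMonoid M] {n : ℕ}
    (f : (Fin (n + 1) → α) → M) :
    ∑ ω, f ω = ∑ ω : Fin n → α, ∑ b, f (Fin.cons b ω) := by
  rw [← (Fin.consEquiv fun _ => α).sum_comp, Fintype.sum_prod_type_right]
  rfl

theorem wt_half {n : ℕ} (ω : Fin n → Bool) : wt (1 / 2) ω = (1 / 2) ^ n := by
  have half : ∀ i, (if ω i then (1 / 2 : ℝ) else 1 - 1 / 2) = 1 / 2 := fun i => by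
    split <;> norm_num
  simp only [wt, half, prod_const, card_univ, Fintype.card_fin]

theorem expectation_half {n : ℕ} (f : (Fin n → Bool) → ℝ) :
    expectation (1 / 2) f = (∑ ω, f ω) / 2 ^ n := by
  simp only [expectation, wt_half, ← mul_sum, one_div_pow]
  ring

@[simp]
theorem walk_zero {n : ℕ} (ω : Fin n → Bool) : walk ω 0 = 0 := by
  simp [walk]

theorem walk_cons_succ {n : ℕ} (b : Bool) (ω : Fin n → Bool) (j : ℕ) :
    walk (Fin.cons b ω : Fin (n + 1) → Bool) (j + 1) = step b + walk ω j := by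
  simp [walk, sum_filter, Fin.sum_univ_succ]

theorem mplus_nonneg {n : ℕ} (ω : Fin n → Bool) : 0 ≤ mplus ω :=
  walk_zero ω ▸ le_sup' (walk ω) (mem_range.2 n.succ_pos)

theorem mplus_cons {n : ℕ} (b : Bool) (ω : Fin n → Bool) :
    mplus (Fin.cons b ω : Fin (n + 1) → Bool) = max 0 (step b + mplus ω) := by
  apply le_antisymm
  · refine sup'_le _ _ fun j hj => ?_
    rcases j with _ | j
    · simp
    · rw [walk_cons_succ]
      exact le_max_of_le_right
        (add_le_add_right (le_sup' _ (by simpa using hj)) _)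
  · refine max_le (mplus_nonneg _) ?_
    obtain ⟨j, hj, hmax⟩ := exists_mem_eq_sup' nonempty_range_add_one (walk ω)
    rw [mplus, hmax, ← walk_cons_succ]
    exact le_sup' _ (by simpa using hj)

theorem sq_add_self_max_zero_add_one_add_sub_one {m : ℤ} (hm : 0 ≤ m) :
    (max 0 (m + 1)) ^ 2 + max 0 (m + 1) + ((max 0 (m - 1)) ^ 2 + max 0 (m - 1))
      = 2 * (m ^ 2 + m) + 2 := by
  rcases hm.eq_or_lt with rfl | hpos
  · norm_num
  · rw [max_eq_right (by omega), max_eq_right (by omega)]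
    ring

theorem sum_mplus_sq_add_mplus (n : ℕ) :
    ∑ ω : Fin n → Bool, ((mplus ω) ^ 2 + mplus ω) = n * 2 ^ n := by
  induction n with
  | zero => simp [mplus]
  | succ n ih =>
    have first_step : ∀ ω : Fin n → Bool,
        ∑ b, ((mplus (Fin.cons b ω : Fin (n + 1) → Bool)) ^ 2 + mplus (Fin.cons b ω))
          = 2 * ((mplus ω) ^ 2 + mplus ω) + 2 := fun ω => by
      simp only [Fintype.sum_bool, mplus_cons, step, Bool.false_eq_true, ↓reduceIte]
      rw [add_comm 1, neg_add_eq_sub]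
      exact sq_add_self_max_zero_add_one_add_sub_one (mplus_nonneg ω)
    rw [Fintype.sum_fin_succ_fun, sum_congr rfl fun ω _ => first_step ω,
      sum_add_distrib, ← mul_sum, ih]
    simp only [sum_const, card_univ, Fintype.card_fun, Fintype.card_bool, Fintype.card_fin,
      nsmul_eq_mul]
    push_cast
    ring

theorem statement1 (n : ℕ) :
    expectation (1/2) (fun ω : Fin n → Bool => ((mplus ω : ℝ)) ^ 2) +
      expectation (1/2) (fun ω : Fin n → Bool => (mplus ω : ℝ)) = n := by
  have key : ∑ ω : Fin n → Bool, ((mplus ω : ℝ) ^ 2 + mplus ω) = n * 2 ^ n := by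
    exact_mod_cast sum_mplus_sq_add_mplus n
  rw [expectation_half, expectation_half, ← add_div, ← sum_add_distrib, key]
  field_simp
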